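/- Let ρ be a nonzero σ-finite Borel measure on (0,1) with ∫₀¹ u ρ(du) < ∞; set φ(r) = ∫₀¹ (1 − (1−u)^r) ρ(du) and κ_{d,r}(ρ) = ∫₀¹ u^d (1−u)^r ρ(du). Fix positive integers d_1,…,d_k with r_0 = 0, r_j = d_1 + ⋯ + d_j and n = r_k. Define p_{j:n} = [κ_{d_j+1, r_{j−1}}(ρ) Π_{l=j+1}^{k} κ_{d_l, r_{l−1}+1}(ρ)] / [κ_{d_j, r_{j−1}}(ρ) Π_{l=j+1}^{k} κ_{d_l, r_{l−1}}(ρ)] · Π_{l=j}^{k} φ(r_l)/φ(r_l+1) for 1 ≤ j ≤ k, and q_{j:n} = [κ_{1, r_{j−1}}(ρ)/φ(r_{j−1}+1)] · Π_{l=j}^{k} [κ_{d_l, r_{l−1}+1}(ρ)/κ_{d_l, r_{l−1}}(ρ)] · Π_{l=j}^{k} φ(r_l)/φ(r_l+1) for 1 ≤ j ≤ k+1 (the products over l from j to k being empty when j = k+1, so q_{k+1:n} = κ_{1,n}(ρ)/φ(n+1)). Then Σ_{j=1}^{k} p_{j:n} + Σ_{j=1}^{k+1} q_{j:n} = 1;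 equivalently, 1 − Σ_{j=1}^{k} p_{j:n} = Σ_{j=1}^{k+1} q_{j:n}. -/

import Mathlib

open MeasureTheory

/-- κ_{d,r}(ρ) = ∫₀¹ u^d (1−u)^r ρ(du). -/
noncomputable def kappa (ρ : Measure ℝ) (d r : ℕ) : ℝ :=
  ∫ u in Set.Ioo (0:ℝ) 1, u ^ d * (1 - u) ^ r ∂ρ

/-- φ(r) = ∫₀¹ (1 − (1−u)^r) ρ(du). -/
noncomputable def phi (ρ : Measure ℝ) (r : ℕ) : ℝ :=
  ∫ u in Set.Ioo (0:ℝ) 1, (1 - (1 - u) ^ r) ∂ρ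

lemma int_kappa (ρ : Measure ℝ)
    (hu : IntegrableOn (fun u => u) (Set.Ioo (0:ℝ) 1) ρ)
    {d : ℕ} (r : ℕ) (hd : 1 ≤ d) :
    IntegrableOn (fun u : ℝ => u ^ d * (1 - u) ^ r) (Set.Ioo (0:ℝ) 1) ρ := by
  apply Integrable.mono hu
  · exact (Continuous.aestronglyMeasurable (by continuity)).restrict
  · filter_upwards [ae_restrict_mem measurableSet_Ioo] with u hmem
    obtain ⟨h0, h1⟩ := hmem
    have h1u : (0:ℝ) ≤ 1 - u := by linarith
    have hpow : u ^ d * (1 - u) ^ r ≤ u := by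
      calc u ^ d * (1 - u) ^ r ≤ u ^ d * 1 := by
            apply mul_le_mul_of_nonneg_left _ (pow_nonneg h0.le d)
            exact pow_le_one₀ h1u (by linarith)
        _ = u ^ d := mul_one _
        _ ≤ u ^ 1 := pow_le_pow_of_le_one h0.le h1.le hd
        _ = u := pow_one u
    rw [Real.norm_eq_abs, Real.norm_eq_abs, abs_of_nonneg (by positivity),
      abs_of_nonneg h0.le]
    exact hpow

lemma int_phi (ρ : Measure ℝ)
    (hu : IntegrableOn (fun u => u) (Set.Ioo (0:ℝ) 1) ρ) (r : ℕ) :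
    IntegrableOn (fun u : ℝ => 1 - (1 - u) ^ r) (Set.Ioo (0:ℝ) 1) ρ := by
  apply Integrable.mono (hu.const_mul (r : ℝ))
  · exact (Continuous.aestronglyMeasurable (by continuity)).restrict
  · filter_upwards [ae_restrict_mem measurableSet_Ioo] with u hmem
    obtain ⟨h0, h1⟩ := hmem
    have h1u : (0:ℝ) ≤ 1 - u := by linarith
    have hle : 1 - (1 - u) ^ r ≤ (r : ℝ) * u := by
      have := one_add_mul_le_pow (a := -u) (by linarith) r
      have h2 : 1 + (r:ℝ) * (-u) ≤ (1 - u) ^ r := by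
        simpa [sub_eq_add_neg] using this
      nlinarith
    have hnn : 0 ≤ 1 - (1 - u) ^ r := by
      have := pow_le_one₀ (n := r) h1u (by linarith : (1:ℝ) - u ≤ 1)
      linarith
    rw [Real.norm_eq_abs, Real.norm_eq_abs, abs_of_nonneg hnn,
      abs_of_nonneg (by positivity)]
    exact hle

lemma kappa_split (ρ : Measure ℝ)
    (hu : IntegrableOn (fun u => u) (Set.Ioo (0:ℝ) 1) ρ)
    {d : ℕ} (r : ℕ) (hd : 1 ≤ d) :
    kappa ρ d r = kappa ρ d (r + 1) + kappa ρ (d + 1) r := by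
  unfold kappa
  rw [← integral_add (int_kappa ρ hu (r+1) hd)
    (int_kappa ρ hu r (le_trans hd (Nat.le_succ d)))]
  apply setIntegral_congr_fun measurableSet_Ioo
  intro u _
  simp only [Nat.succ_eq_add_one, pow_succ]
  ring

lemma phi_split (ρ : Measure ℝ)
    (hu : IntegrableOn (fun u => u) (Set.Ioo (0:ℝ) 1) ρ) (r : ℕ) :
    phi ρ (r + 1) = phi ρ r + kappa ρ 1 r := by
  unfold phi kappa
  rw [← integral_add (int_phi ρ hu r) (int_kappa ρ hu r le_rfl)]
  apply setIntegral_congr_fun measurableSet_Ioo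
  intro u _
  ring

lemma phi_zero (ρ : Measure ℝ) : phi ρ 0 = 0 := by
  simp [phi]

lemma kappa_pos (ρ : Measure ℝ)
    (hρ : ρ (Set.Ioo (0:ℝ) 1) ≠ 0)
    (hu : IntegrableOn (fun u => u) (Set.Ioo (0:ℝ) 1) ρ)
    {d : ℕ} (r : ℕ) (hd : 1 ≤ d) : 0 < kappa ρ d r := by
  unfold kappa
  rw [setIntegral_pos_iff_support_of_nonneg_ae]
  · have : Function.support (fun u : ℝ => u ^ d * (1 - u) ^ r) ∩ Set.Ioo 0 1
        = Set.Ioo 0 1 := by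
      apply Set.inter_eq_self_of_subset_right
      intro u hmem
      obtain ⟨h0, h1⟩ := hmem
      have h2 : (0:ℝ) < 1 - u := by linarith
      have : 0 < u ^ d * (1 - u) ^ r := by positivity
      exact ne_of_gt this
    rw [this]
    exact hρ.bot_lt
  · filter_upwards [ae_restrict_mem measurableSet_Ioo] with u hmem
    obtain ⟨h0, h1⟩ := hmem
    have h2 : (0:ℝ) < 1 - u := by linarith
    simp only [Pi.zero_apply]
    positivity
  · exact int_kappa ρ hu r hd

lemma phi_pos (ρ : Measure ℝ)
    (hρ : ρ (Set.Ioo (0:ℝ) 1) ≠ 0)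
    (hu : IntegrableOn (fun u => u) (Set.Ioo (0:ℝ) 1) ρ)
    {r : ℕ} (hr : 1 ≤ r) : 0 < phi ρ r := by
  unfold phi
  rw [setIntegral_pos_iff_support_of_nonneg_ae]
  · have : Function.support (fun u : ℝ => 1 - (1 - u) ^ r) ∩ Set.Ioo 0 1
        = Set.Ioo 0 1 := by
      apply Set.inter_eq_self_of_subset_right
      intro u hmem
      obtain ⟨h0, h1⟩ := hmem
      have hlt : (1 - u) ^ r < 1 :=
        pow_lt_one₀ (by linarith) (by linarith) (by omega)
      have : (0:ℝ) < 1 - (1 - u) ^ r := by linarith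
      exact ne_of_gt this
    rw [this]
    exact hρ.bot_lt
  · filter_upwards [ae_restrict_mem measurableSet_Ioo] with u hmem
    obtain ⟨h0, h1⟩ := hmem
    have := pow_le_one₀ (n := r) (by linarith : (0:ℝ) ≤ 1 - u) (by linarith)
    simp only [Pi.zero_apply]
    linarith
  · exact int_phi ρ hu r

noncomputable def Bfun (ρ : Measure ℝ) (d r : ℕ → ℕ) (k j : ℕ) : ℝ :=
  phi ρ (r j) / phi ρ (r j + 1) *
    ((∏ l ∈ Finset.Ico j k, kappa ρ (d l) (r l + 1) / kappa ρ (d l) (r l)) *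
      ∏ l ∈ Finset.Ico j k, phi ρ (r (l + 1)) / phi ρ (r (l + 1) + 1))

lemma step_alg (a c G1 G F1 F2 X1 X2 Y1 Y2 : ℝ) (ha : a ≠ 0) (hX2 : X2 ≠ 0)
    (hG : G ≠ 0) (hF2 : F2 ≠ 0) (hY2 : Y2 ≠ 0) :
    ((a - c) * X1) / (a * X2) * (F1 / F2 * (Y1 / Y2)) +
      (G - G1) / G * (c / a * (X1 / X2)) * (F1 / F2 * (Y1 / Y2)) =
    F1 / F2 * (X1 / X2 * (Y1 / Y2)) -
      G1 / G * (c / a * (X1 / X2) * (F1 / F2 * (Y1 / Y2))) := by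
  field_simp
  ring


/-- The prediction-rule probabilities of an NTR species sampling model sum to one:
Σ_{j=1}^{k} p_{j:n} + Σ_{j=1}^{k+1} q_{j:n} = 1.  Here clusters are 0-indexed, so
`r j = d_1 + ⋯ + d_j` is the cumulative size of the first `j` clusters
(i.e. `r_{j-1}` of the 1-indexed statement). -/
theorem stmt_4 (ρ : Measure ℝ) [SigmaFinite ρ]
    (hsupp : ρ (Set.Ioo (0:ℝ) 1)ᶜ = 0)
    (hρ : ρ (Set.Ioo (0:ℝ) 1) ≠ 0)
    (hu : IntegrableOn (fun u => u) (Set.Ioo (0:ℝ) 1) ρ)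
    (k : ℕ) (hk : 0 < k) (d : ℕ → ℕ) (hd : ∀ i < k, 1 ≤ d i)
    (r : ℕ → ℕ) (hr : ∀ j, r j = ∑ i ∈ Finset.range j, d i)
    (n : ℕ) (hn : n = r k)
    (p q : ℕ → ℝ)
    (hp : ∀ j < k, p j =
      (kappa ρ (d j + 1) (r j) *
          ∏ l ∈ Finset.Ico (j + 1) k, kappa ρ (d l) (r l + 1)) /
        (kappa ρ (d j) (r j) *
          ∏ l ∈ Finset.Ico (j + 1) k, kappa ρ (d l) (r l)) *
        ∏ l ∈ Finset.Ico j k, phi ρ (r (l + 1)) / phi ρ (r (l + 1) + 1))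
    (hq : ∀ j < k + 1, q j =
      kappa ρ 1 (r j) / phi ρ (r j + 1) *
        (∏ l ∈ Finset.Ico j k, kappa ρ (d l) (r l + 1) / kappa ρ (d l) (r l)) *
        ∏ l ∈ Finset.Ico j k, phi ρ (r (l + 1)) / phi ρ (r (l + 1) + 1)) :
    (∑ j ∈ Finset.range k, p j) + (∑ j ∈ Finset.range (k + 1), q j) = 1 := by
  have hr0 : r 0 = 0 := by simp [hr]
  have hφpos : ∀ m : ℕ, 1 ≤ m → 0 < phi ρ m := fun m hm => phi_pos ρ hρ hu hm
  have hstep : ∀ j < k, p j + q j = Bfun ρ d r k (j + 1) - Bfun ρ d r k j := by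
    intro j hj
    have hdj : 1 ≤ d j := hd j hj
    have ha : 0 < kappa ρ (d j) (r j) := kappa_pos ρ hρ hu _ hdj
    have hX2 : 0 < ∏ l ∈ Finset.Ico (j + 1) k, kappa ρ (d l) (r l) :=
      Finset.prod_pos fun l hl =>
        kappa_pos ρ hρ hu _ (hd l (Finset.mem_Ico.mp hl).2)
    have hY2 : 0 < ∏ l ∈ Finset.Ico (j + 1) k, phi ρ (r (l + 1) + 1) :=
      Finset.prod_pos fun l hl => hφpos _ (Nat.le_add_left 1 _)
    have hG : 0 < phi ρ (r j + 1) := hφpos _ (Nat.le_add_left 1 (r j))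
    have hG2 : 0 < phi ρ (r (j + 1) + 1) := hφpos _ (Nat.le_add_left 1 _)
    have hN : kappa ρ (d j + 1) (r j)
        = kappa ρ (d j) (r j) - kappa ρ (d j) (r j + 1) := by
      have := kappa_split ρ hu (r j) hdj
      linarith
    have hK1 : kappa ρ 1 (r j) = phi ρ (r j + 1) - phi ρ (r j) := by
      have := phi_split ρ hu (r j)
      linarith
    rw [hp j hj, hq j (by omega)]
    unfold Bfun
    rw [Finset.prod_eq_prod_Ico_succ_bot hj
        (fun l => kappa ρ (d l) (r l + 1) / kappa ρ (d l) (r l)),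
      Finset.prod_eq_prod_Ico_succ_bot hj
        (fun l => phi ρ (r (l + 1)) / phi ρ (r (l + 1) + 1))]
    simp only [Finset.prod_div_distrib]
    rw [hN, hK1]
    exact step_alg _ _ _ _ _ _ _ _ _ _ ha.ne' hX2.ne' hG.ne' hG2.ne' hY2.ne'
  have hq_k : q k = 1 - Bfun ρ d r k k := by
    rw [hq k (by omega)]
    unfold Bfun
    simp only [Finset.Ico_self, Finset.prod_empty, mul_one]
    have hG : 0 < phi ρ (r k + 1) := hφpos _ (Nat.le_add_left 1 (r k))
    have hK1 : kappa ρ 1 (r k) = phi ρ (r k + 1) - phi ρ (r k) := by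
      have := phi_split ρ hu (r k)
      linarith
    rw [hK1]
    field_simp
  have hB0 : Bfun ρ d r k 0 = 0 := by
    unfold Bfun
    rw [hr0, phi_zero]
    simp
  have hsum : ∑ j ∈ Finset.range k, (p j + q j)
      = Bfun ρ d r k k - Bfun ρ d r k 0 := by
    rw [Finset.sum_congr rfl fun j hj => hstep j (Finset.mem_range.mp hj)]
    exact Finset.sum_range_sub (Bfun ρ d r k) k
  rw [Finset.sum_range_succ, ← add_assoc, ← Finset.sum_add_distrib, hsum, hB0,
    hq_k]
  ring
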